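/- Let y = x′β₀ + e be a regression model in ℝᵖ with finite second moments and E_{H₀}[x_j²] > 0, let λ ≥ 0, fix j ∈ {1,…,p} and (x₀, y₀), and let H_ε = (1 − ε)H₀ + ε·δ_{(x₀,y₀)}. Let β* : [0, δ) → ℝᵖ be differentiable at 0 and write β* = β*(0), IF(β*) = (β*)′(0), and ỹ⁽ʲ⁾ = y − (x⁽ʲ⁾)′(β*)⁽ʲ⁾, where z⁽ʲ⁾ deletes the j-th coordinate of z. Define the coordinate-descent update g(ε) = sign(m(ε))·max(|m(ε)|/s(ε) − λ/s(ε), 0), where m(ε) = E_{H_ε}[x_j·(y − (x⁽ʲ⁾)′(β*(ε))⁽ʲ⁾)] and s(ε) = E_{H_ε}[x_j²]. Then: (i) if |E_{H₀}[x_j·ỹ⁽ʲ⁾]| < λ, g is constantly 0 near 0, so g′(0) = 0; (ii) if |E_{H₀}[x_j·ỹ⁽ʲ⁾]| > λ, g is differentiable at 0 with g′(0) = (−E_{H₀}[x_j·(x⁽ʲ⁾)′·IF(β*)⁽ʲ⁾] + (y₀ − (x₀⁽ʲ⁾)′(β*)⁽ʲ⁾)·(x₀)_j)/E_{H₀}[x_j²]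 − E_{H₀}[x_j·ỹ⁽ʲ⁾]·(x₀)_j²/(E_{H₀}[x_j²])² − λ·(E_{H₀}[x_j²] − (x₀)_j²)/(E_{H₀}[x_j²])²·sign(E_{H₀}[x_j·ỹ⁽ʲ⁾]). -/

import Mathlib

/-!
On `[0, 1]` the contaminated expectation is affine in the mixing weight,
`E_{H_ε} f_ε = (1 - ε) E_{H₀} f_ε + ε f_ε(z₀)`, so its right derivative at `0` is the derivative of
the `H₀` part plus `f₀(z₀) - E_{H₀} f₀`; for the partial residual the `H₀` part is affine in
`β*(ε)`, which gives `m'(0)` and `s'(0)`. Near `0` we have `s > 0`, and the soft threshold is either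
identically `0` (when `|m(0)| < λ`) or, since `m` keeps the sign of `m(0)`, equal to the
differentiable `(m - λ sign m(0)) / s` (when `|m(0)| > λ`); the quotient rule gives the formula.
-/

open MeasureTheory ProbabilityTheory Matrix Filter Topology Asymptotics

theorem hasDerivWithinAt_sub_mul_of_continuousWithinAt {b : ℝ → ℝ} {t : Set ℝ} {x : ℝ}
    (hb : ContinuousWithinAt b t x) :
    HasDerivWithinAt (fun y => (y - x) * b y) (b x) t x := by
  rw [hasDerivWithinAt_iff_isLittleO]
  have hb' : (fun y => b y - b x) =o[𝓝[t] x] (fun _ => (1 : ℝ)) :=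
    (isLittleO_one_iff ℝ).mpr (tendsto_sub_nhds_zero_iff.mpr hb)
  simpa [smul_eq_mul, mul_sub] using (isBigO_refl (fun y => y - x) (𝓝[t] x)).mul_isLittleO hb'

section PiDerivatives

variable {𝕜 ι : Type*} [NontriviallyNormedField 𝕜] {u : 𝕜 → ι → 𝕜} {u' : ι → 𝕜}
  {t : Set 𝕜} {x : 𝕜}

theorem HasDerivWithinAt.update_const [DecidableEq ι] (hu : HasDerivWithinAt u u' t x)
    (j : ι) (c : 𝕜) :
    HasDerivWithinAt (fun y => Function.update (u y) j c) (Function.update u' j 0) t x := by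
  refine hasDerivWithinAt_pi.mpr fun k => ?_
  by_cases hk : k = j
  · subst hk
    simpa using hasDerivWithinAt_const x t c
  · simpa [Function.update_of_ne hk] using hasDerivWithinAt_pi.mp hu k

theorem HasDerivWithinAt.const_dotProduct [Fintype ι] (v : ι → 𝕜)
    (hu : HasDerivWithinAt u u' t x) :
    HasDerivWithinAt (fun y => v ⬝ᵥ u y) (v ⬝ᵥ u') t x :=
  HasDerivWithinAt.fun_sum fun k _ => (hasDerivWithinAt_pi.mp hu k).const_mul (v k)

end PiDerivatives

section LinearIntegrals

variable {α ι : Type*} [MeasurableSpace α] [Fintype ι] {H : Measure α} {φ Y : α → ℝ}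
  {ψ : α → ι → ℝ}

theorem mul_dotProduct_eq_sum {R : Type*} [CommSemiring R] (a : R) (v b : ι → R) :
    a * (v ⬝ᵥ b) = ∑ k, a * v k * b k := by
  simp only [dotProduct, Finset.mul_sum, mul_assoc]

theorem integrable_mul_dotProduct (hψ : ∀ k, Integrable (fun z => φ z * ψ z k) H) (b : ι → ℝ) :
    Integrable (fun z => φ z * (ψ z ⬝ᵥ b)) H := by
  simp only [mul_dotProduct_eq_sum]
  exact integrable_finsetSum _ fun k _ => (hψ k).mul_const (b k)

theorem integral_mul_dotProduct (hψ : ∀ k, Integrable (fun z => φ z * ψ z k) H) (b : ι → ℝ) :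
    ∫ z, φ z * (ψ z ⬝ᵥ b) ∂H = (fun k => ∫ z, φ z * ψ z k ∂H) ⬝ᵥ b := by
  simp only [mul_dotProduct_eq_sum]
  rw [integral_finsetSum _ fun k _ => (hψ k).mul_const (b k)]
  simp only [integral_mul_const, dotProduct]

theorem integrable_mul_sub_dotProduct (hψ : ∀ k, Integrable (fun z => φ z * ψ z k) H)
    (hY : Integrable (fun z => φ z * Y z) H) (b : ι → ℝ) :
    Integrable (fun z => φ z * (Y z - ψ z ⬝ᵥ b)) H := by
  simp only [mul_sub]
  exact hY.sub (integrable_mul_dotProduct hψ b)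

theorem HasDerivWithinAt.integral_mul_sub_dotProduct {u : ℝ → ι → ℝ} {u' : ι → ℝ}
    {t : Set ℝ} {x : ℝ} (hψ : ∀ k, Integrable (fun z => φ z * ψ z k) H)
    (hY : Integrable (fun z => φ z * Y z) H) (hu : HasDerivWithinAt u u' t x) :
    HasDerivWithinAt (fun ε => ∫ z, φ z * (Y z - ψ z ⬝ᵥ u ε) ∂H)
      (-∫ z, φ z * (ψ z ⬝ᵥ u') ∂H) t x := by
  have hlin : ∀ b, ∫ z, φ z * (Y z - ψ z ⬝ᵥ b) ∂H
      = ∫ z, φ z * Y z ∂H - (fun k => ∫ z, φ z * ψ z k ∂H) ⬝ᵥ b := fun b => by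
    simp only [mul_sub]
    rw [integral_sub hY (integrable_mul_dotProduct hψ b), integral_mul_dotProduct hψ]
  simp only [hlin, integral_mul_dotProduct hψ]
  exact (hu.const_dotProduct _).const_sub _

end LinearIntegrals

section Contamination

variable {α : Type*} [MeasurableSpace α]

noncomputable def contamination (H : Measure α) (z₀ : α) (ε : ℝ) : Measure α :=
  ENNReal.ofReal (1 - ε) • H + ENNReal.ofReal ε • Measure.dirac z₀

@[simp]
theorem contamination_zero (H : Measure α) (z₀ : α) : contamination H z₀ 0 = H := by
  simp [contamination]

variable [MeasurableSingletonClass α] {H : Measure α} {z₀ : α}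

theorem integral_contamination {f : α → ℝ} (hf : Integrable f H) {ε : ℝ}
    (hε : ε ∈ Set.Icc (0 : ℝ) 1) :
    ∫ z, f z ∂contamination H z₀ ε = (1 - ε) * ∫ z, f z ∂H + ε * f z₀ := by
  have hdirac : Integrable f (Measure.dirac z₀) := integrable_dirac enorm_lt_top
  rw [contamination, integral_add_measure (hf.smul_measure ENNReal.ofReal_ne_top)
      (hdirac.smul_measure ENNReal.ofReal_ne_top),
    integral_smul_measure, integral_smul_measure, integral_dirac,
    ENNReal.toReal_ofReal (by linarith [hε.2]), ENNReal.toReal_ofReal hε.1, smul_eq_mul,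
    smul_eq_mul]

theorem hasDerivWithinAt_integral_contamination {f : ℝ → α → ℝ} (hf : ∀ ε, Integrable (f ε) H)
    {a' : ℝ} (ha : HasDerivWithinAt (fun ε => ∫ z, f ε z ∂H) a' (Set.Ici 0) 0)
    (hb : ContinuousWithinAt (fun ε => f ε z₀) (Set.Ici 0) 0) :
    HasDerivWithinAt (fun ε => ∫ z, f ε z ∂contamination H z₀ ε)
      (a' - ∫ z, f 0 z ∂H + f 0 z₀) (Set.Ici 0) 0 := by
  have hmix : HasDerivWithinAt (fun ε => (1 - ε) * ∫ z, f ε z ∂H + (ε - 0) * f ε z₀)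
      ((-1) * ∫ z, f 0 z ∂H + (1 - 0) * a' + f 0 z₀) (Set.Ici 0) 0 :=
    (((hasDerivWithinAt_id _ _).const_sub 1).mul ha).add
      (hasDerivWithinAt_sub_mul_of_continuousWithinAt hb)
  have hform : ∀ᶠ ε in 𝓝[≥] (0 : ℝ), ∫ z, f ε z ∂contamination H z₀ ε
      = (1 - ε) * ∫ z, f ε z ∂H + (ε - 0) * f ε z₀ := by
    filter_upwards [Icc_mem_nhdsGE one_pos] with ε hε
    rw [integral_contamination (hf ε) hε, sub_zero]
  exact (hmix.congr_of_eventuallyEq_of_mem hform Set.self_mem_Ici).congr_deriv (by ring)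

end Contamination

section SoftThreshold

noncomputable def softThreshold (lam m s : ℝ) : ℝ :=
  Real.sign m * max (|m| / s - lam / s) 0

variable {lam m s : ℝ}

theorem softThreshold_eq_zero (hs : 0 < s) (hm : |m| < lam) : softThreshold lam m s = 0 := by
  rw [softThreshold, div_sub_div_same,
    max_eq_right (div_neg_of_neg_of_pos (by linarith) hs).le, mul_zero]

theorem softThreshold_eq_of_lt_abs (hs : 0 < s) (hlam : 0 ≤ lam) (hm : lam < |m|) :
    softThreshold lam m s = (m - lam * Real.sign m) / s := by
  rw [softThreshold, div_sub_div_same, max_eq_left (div_pos (by linarith) hs).le]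
  rcases lt_or_gt_of_ne (show m ≠ 0 by rintro rfl; simp at hm; linarith) with hneg | hpos
  · rw [Real.sign_of_neg hneg, abs_of_neg hneg]
    ring
  · rw [Real.sign_of_pos hpos, abs_of_pos hpos]
    ring

theorem Filter.Tendsto.eventually_sign_eq {β : Type*} {l : Filter β} {f : β → ℝ} {a : ℝ}
    (hf : Tendsto f l (𝓝 a)) (ha : a ≠ 0) : ∀ᶠ y in l, Real.sign (f y) = Real.sign a := by
  rcases lt_or_gt_of_ne ha with hneg | hpos
  · filter_upwards [hf.eventually_lt_const hneg] with y hy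
    rw [Real.sign_of_neg hy, Real.sign_of_neg hneg]
  · filter_upwards [hf.eventually_const_lt hpos] with y hy
    rw [Real.sign_of_pos hy, Real.sign_of_pos hpos]

theorem eventually_softThreshold_eq_zero {β : Type*} {l : Filter β} {m s : β → ℝ} {m₀ s₀ : ℝ}
    (hm : Tendsto m l (𝓝 m₀)) (hs : Tendsto s l (𝓝 s₀)) (hs₀ : 0 < s₀) (hm₀ : |m₀| < lam) :
    ∀ᶠ y in l, softThreshold lam (m y) (s y) = 0 := by
  filter_upwards [hs.eventually_const_lt hs₀, hm.abs.eventually_lt_const hm₀] with y hsy hmy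
  exact softThreshold_eq_zero hsy hmy

theorem HasDerivWithinAt.softThreshold {m s : ℝ → ℝ} {m' s' : ℝ} {t : Set ℝ} {x : ℝ}
    (hm : HasDerivWithinAt m m' t x) (hs : HasDerivWithinAt s s' t x) (hsx : 0 < s x)
    (hlam : 0 ≤ lam) (hmx : lam < |m x|) :
    HasDerivWithinAt (fun y => _root_.softThreshold lam (m y) (s y))
      ((m' * s x - (m x - lam * Real.sign (m x)) * s') / s x ^ 2) t x := by
  have hm_tendsto := hm.continuousWithinAt.tendsto
  have hlocal : ∀ᶠ y in 𝓝[t] x,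
      _root_.softThreshold lam (m y) (s y) = (m y - lam * Real.sign (m x)) / s y := by
    filter_upwards [hs.continuousWithinAt.tendsto.eventually_const_lt hsx,
      hm_tendsto.abs.eventually_const_lt hmx,
      hm_tendsto.eventually_sign_eq (abs_pos.mp (hlam.trans_lt hmx))] with y hsy hmy hsign
    rw [softThreshold_eq_of_lt_abs hsy hlam hmy, hsign]
  exact ((hm.sub_const _).div hs hsx.ne').congr_of_eventuallyEq hlocal
    (softThreshold_eq_of_lt_abs hsx hlam hmx)

end SoftThreshold

theorem influence_function_lasso_coordinate_descent_general
    {p : ℕ}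
    (H₀ : Measure ((Fin p → ℝ) × ℝ))
    (hxx : ∀ i i' : Fin p, Integrable (fun z : (Fin p → ℝ) × ℝ => z.1 i * z.1 i') H₀)
    (hxy : ∀ i : Fin p, Integrable (fun z : (Fin p → ℝ) × ℝ => z.1 i * z.2) H₀)
    (lam : ℝ) (hlam : 0 ≤ lam)
    (j : Fin p) (x₀ : Fin p → ℝ) (y₀ : ℝ)
    (Ej : ℝ) (hEj : Ej = ∫ z, (z.1 j) ^ 2 ∂H₀) (hEjpos : 0 < Ej)
    (Hmix : ℝ → Measure ((Fin p → ℝ) × ℝ))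
    (hHmix : ∀ ε : ℝ,
      Hmix ε = ENNReal.ofReal (1 - ε) • H₀ + ENNReal.ofReal ε • Measure.dirac (x₀, y₀))
    (bstar : ℝ → (Fin p → ℝ)) (IFbstar : Fin p → ℝ)
    (hbstar : HasDerivWithinAt bstar IFbstar (Set.Ici 0) 0)
    (m s : ℝ → ℝ)
    (hm : ∀ ε : ℝ, m ε = ∫ z, z.1 j * (z.2 - z.1 ⬝ᵥ Function.update (bstar ε) j 0) ∂(Hmix ε))
    (hs : ∀ ε : ℝ, s ε = ∫ z, (z.1 j) ^ 2 ∂(Hmix ε))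
    (g : ℝ → ℝ)
    (hg : ∀ ε : ℝ, g ε = Real.sign (m ε) * max (|m ε| / s ε - lam / s ε) 0)
    (mt : ℝ) (hmt : mt = ∫ z, z.1 j * (z.2 - z.1 ⬝ᵥ Function.update (bstar 0) j 0) ∂H₀) :
    (|mt| < lam →
      (∀ᶠ ε in nhdsWithin (0 : ℝ) (Set.Ici 0), g ε = 0) ∧
        HasDerivWithinAt g 0 (Set.Ici 0) 0) ∧
    (lam < |mt| →
      HasDerivWithinAt g
        ((-(∫ z, z.1 j * (z.1 ⬝ᵥ Function.update IFbstar j 0) ∂H₀)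
            + (y₀ - x₀ ⬝ᵥ Function.update (bstar 0) j 0) * x₀ j) / Ej
          - mt * (x₀ j) ^ 2 / Ej ^ 2
          - lam * (Ej - (x₀ j) ^ 2) / Ej ^ 2 * Real.sign mt)
        (Set.Ici 0) 0) := by
  obtain rfl : Hmix = contamination H₀ (x₀, y₀) := funext hHmix
  obtain rfl : g = fun ε => softThreshold lam (m ε) (s ε) := funext hg
  have hu := hbstar.update_const j 0
  have hm' : HasDerivWithinAt m
      (-(∫ z, z.1 j * (z.1 ⬝ᵥ Function.update IFbstar j 0) ∂H₀) - mt
        + x₀ j * (y₀ - x₀ ⬝ᵥ Function.update (bstar 0) j 0)) (Set.Ici 0) 0 := by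
    rw [funext hm, hmt]
    exact hasDerivWithinAt_integral_contamination
      (fun ε => integrable_mul_sub_dotProduct (hxx j) (hxy j) _)
      (hu.integral_mul_sub_dotProduct (hxx j) (hxy j))
      (((hu.const_dotProduct x₀).const_sub y₀).const_mul (x₀ j)).continuousWithinAt
  have hs' : HasDerivWithinAt s (0 - Ej + x₀ j ^ 2) (Set.Ici 0) 0 := by
    rw [funext hs, hEj]
    exact hasDerivWithinAt_integral_contamination (fun _ => by simpa [sq] using hxx j j)
      (hasDerivWithinAt_const _ _ _) continuousWithinAt_const
  have hm0 : m 0 = mt := by rw [hm, contamination_zero, hmt]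
  have hs0 : s 0 = Ej := by rw [hs, contamination_zero, hEj]
  refine ⟨fun hsmall => ?_, fun hlarge => ?_⟩
  · have hzero := eventually_softThreshold_eq_zero hm'.continuousWithinAt.tendsto
      hs'.continuousWithinAt.tendsto (hs0 ▸ hEjpos) (hm0 ▸ hsmall)
    exact ⟨hzero, (hasDerivWithinAt_const _ _ 0).congr_of_eventuallyEq_of_mem hzero
      Set.self_mem_Ici⟩
  · convert hm'.softThreshold hs' (hs0 ▸ hEjpos) hlam (hm0 ▸ hlarge) using 1
    rw [hm0, hs0]
    field_simp
    ring

/-- Lemma 3 of the paper: influence function of one coordinate-descent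
(soft-thresholding) update of the lasso at the contaminated distribution
`H_ε = (1-ε)H₀ + ε·δ_{(x₀,y₀)}`, where the previous value `β*(ε)` is right
differentiable at `0` with derivative `IF(β*)`. Deleting the j-th coordinate of a
vector `v` is encoded as `Function.update v j 0` inside the dot products. -/
theorem influence_function_lasso_coordinate_descent
    {p : ℕ} {Ω : Type*} [MeasurableSpace Ω] (μ : Measure Ω) [IsProbabilityMeasure μ]
    (X : Ω → (Fin p → ℝ)) (e : Ω → ℝ) (hXm : Measurable X) (hem : Measurable e)
    (hind : IndepFun X e μ)
    (β₀ : Fin p → ℝ)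
    (H₀ : Measure ((Fin p → ℝ) × ℝ))
    (hH₀ : H₀ = μ.map (fun ω => (X ω, X ω ⬝ᵥ β₀ + e ω)))
    (hxx : ∀ i i' : Fin p, Integrable (fun z : (Fin p → ℝ) × ℝ => z.1 i * z.1 i') H₀)
    (hxy : ∀ i : Fin p, Integrable (fun z : (Fin p → ℝ) × ℝ => z.1 i * z.2) H₀)
    (hy2 : Integrable (fun z : (Fin p → ℝ) × ℝ => z.2 ^ 2) H₀)
    (lam : ℝ) (hlam : 0 ≤ lam)
    (j : Fin p) (x₀ : Fin p → ℝ) (y₀ : ℝ)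
    (Ej : ℝ) (hEj : Ej = ∫ z, (z.1 j) ^ 2 ∂H₀) (hEjpos : 0 < Ej)
    (Hmix : ℝ → Measure ((Fin p → ℝ) × ℝ))
    (hHmix : ∀ ε : ℝ,
      Hmix ε = ENNReal.ofReal (1 - ε) • H₀ + ENNReal.ofReal ε • Measure.dirac (x₀, y₀))
    (bstar : ℝ → (Fin p → ℝ)) (IFbstar : Fin p → ℝ)
    (hbstar : HasDerivWithinAt bstar IFbstar (Set.Ici 0) 0)
    (m s : ℝ → ℝ)
    (hm : ∀ ε : ℝ, m ε = ∫ z, z.1 j * (z.2 - z.1 ⬝ᵥ Function.update (bstar ε) j 0) ∂(Hmix ε))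
    (hs : ∀ ε : ℝ, s ε = ∫ z, (z.1 j) ^ 2 ∂(Hmix ε))
    (g : ℝ → ℝ)
    (hg : ∀ ε : ℝ, g ε = Real.sign (m ε) * max (|m ε| / s ε - lam / s ε) 0)
    (mt : ℝ) (hmt : mt = ∫ z, z.1 j * (z.2 - z.1 ⬝ᵥ Function.update (bstar 0) j 0) ∂H₀) :
    (|mt| < lam →
      (∀ᶠ ε in nhdsWithin (0 : ℝ) (Set.Ici 0), g ε = 0) ∧
        HasDerivWithinAt g 0 (Set.Ici 0) 0) ∧
    (lam < |mt| →
      HasDerivWithinAt g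
        ((-(∫ z, z.1 j * (z.1 ⬝ᵥ Function.update IFbstar j 0) ∂H₀)
            + (y₀ - x₀ ⬝ᵥ Function.update (bstar 0) j 0) * x₀ j) / Ej
          - mt * (x₀ j) ^ 2 / Ej ^ 2
          - lam * (Ej - (x₀ j) ^ 2) / Ej ^ 2 * Real.sign mt)
        (Set.Ici 0) 0) :=
  influence_function_lasso_coordinate_descent_general H₀ hxx hxy lam hlam j x₀ y₀ Ej hEj hEjpos Hmix
    hHmix bstar IFbstar hbstar m s hm hs g hg mt hmt
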